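/- Let R be an LM-system and s, t terms. Then s →*_R t if and only if for every outermost distinguishing position p of s and t, s|_p →*_R t|_p. -/

import Mathlib

/-! Basic first-order terms, positions, substitutions and rewriting. -/

inductive Term (F : Type) : Type
  | var : Nat → Term F
  | app : F → List (Term F) → Term F

namespace Term

def subst {F : Type} (σ : Nat → Term F) : Term F → Term F
  | var n => σ n
  | app f ts => app f (ts.attach.map fun ⟨t, _⟩ => t.subst σ)

def root {F : Type} : Term F → Option F
  | var _ => none
  | app f _ => some f

def label {F : Type} : Term F → F ⊕ Nat
  | var n => Sum.inr n
  | app f _ => Sum.inl f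

def IsVar {F : Type} : Term F → Prop
  | var _ => True
  | app _ _ => False

def varsL {F : Type} : Term F → List Nat
  | var n => [n]
  | app _ ts => (ts.attach.map fun ⟨t, _⟩ => t.varsL).flatten

end Term

abbrev Rule (F : Type) := Term F × Term F
abbrev TRS (F : Type) := Set (Rule F)

/-- `SubtermAt t p u` : the subterm of `t` at position `p` is `u`. -/
inductive SubtermAt {F : Type} : Term F → List Nat → Term F → Prop
  | here (t : Term F) : SubtermAt t [] t
  | there {f : F} {ts : List (Term F)} {i : Nat} {u : Term F} {p : List Nat} {v : Term F} :
      ts[i]? = some u → SubtermAt u p v → SubtermAt (Term.app f ts) (i :: p) v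

/-- `ReplaceAt t p v t'` : replacing the subterm of `t` at position `p` by `v` yields `t'`. -/
inductive ReplaceAt {F : Type} : Term F → List Nat → Term F → Term F → Prop
  | here (t u : Term F) : ReplaceAt t [] u u
  | there {f : F} {ts : List (Term F)} {i : Nat} {u : Term F} {p : List Nat} {v w : Term F} :
      ts[i]? = some u → ReplaceAt u p v w →
      ReplaceAt (Term.app f ts) (i :: p) v (Term.app f (ts.set i w))

variable {F : Type}

/-- One rewrite step using the given rule (at some position, with some substitution). -/
def RuleStep (ρ : Rule F) (s t : Term F) : Prop :=
  ∃ (σ : Nat → Term F) (p : List Nat),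
    SubtermAt s p (ρ.1.subst σ) ∧ ReplaceAt s p (ρ.2.subst σ) t

def OneStep (R : TRS F) (s t : Term F) : Prop := ∃ ρ ∈ R, RuleStep ρ s t

/-- A rewrite step at the root position. -/
def RootStep (R : TRS F) (s t : Term F) : Prop :=
  ∃ ρ ∈ R, ∃ σ : Nat → Term F, s = ρ.1.subst σ ∧ t = ρ.2.subst σ

def StarRW (R : TRS F) : Term F → Term F → Prop := Relation.ReflTransGen (OneStep R)
def Plus (R : TRS F) : Term F → Term F → Prop := Relation.TransGen (OneStep R)
/-- Convertibility (the congruence / equational theory generated by `R`). -/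
def Conv (R : TRS F) : Term F → Term F → Prop := Relation.EqvGen (OneStep R)
def Joinable (R : TRS F) (s t : Term F) : Prop := ∃ u, StarRW R s u ∧ StarRW R t u
def NormalForm (R : TRS F) (t : Term F) : Prop := ∀ u, ¬ OneStep R t u
/-- `t` is the `R`-normal form of `s`. -/
def NFof (R : TRS F) (s t : Term F) : Prop := StarRW R s t ∧ NormalForm R t
def Terminating (R : TRS F) : Prop := WellFounded (fun a b : Term F => OneStep R b a)
def Confluent (R : TRS F) : Prop := ∀ s t u, StarRW R s t → StarRW R s u → Joinable R t u
def Convergent (R : TRS F) : Prop := Confluent R ∧ Terminating R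

/-- every proper subterm is irreducible -/
def EpsIrreducible (R : TRS F) (t : Term F) : Prop :=
  ∀ p u, SubtermAt t p u → p ≠ [] → NormalForm R u

def InnermostRedex (R : TRS F) (t : Term F) : Prop :=
  EpsIrreducible R t ∧ ¬ NormalForm R t

/-- Forward-closed, via the one-step-to-normal-form characterization. -/
def FCclosed (R : TRS F) : Prop :=
  ∀ t, InnermostRedex R t → ∀ u, NFof R t u → OneStep R t u

def Unifies (σ : Nat → Term F) (s t : Term F) : Prop := s.subst σ = t.subst σ

def IsMGU (σ : Nat → Term F) (s t : Term F) : Prop :=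
  Unifies σ s t ∧ ∀ τ, Unifies τ s t → ∃ δ, ∀ x, τ x = (σ x).subst δ

def IsRenaming (ρ : Nat → Term F) : Prop :=
  ∃ f : Nat → Nat, Function.Injective f ∧ ∀ n, ρ n = Term.var (f n)

/-- Redundancy criterion for an oriented equation `e` whose right-hand side is
reachable from its left-hand side: some proper subterm of the lhs is reducible. -/
def Redundant (R : TRS F) (e : Rule F) : Prop :=
  ∃ p u, p ≠ ([] : List Nat) ∧ SubtermAt e.1 p u ∧ ¬ NormalForm R u

/-- `R₁ ↝ R₂`: forward overlaps of rules of `R₂` (renamed apart) into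
right-hand sides of rules of `R₁`, at non-variable positions, via an mgu. -/
def FStep (R₁ R₂ : TRS F) : TRS F :=
  { e | ∃ (l₁ r₁ l₂ r₂ : Term F) (ρ : Nat → Term F) (p : List Nat) (u : Term F)
          (σ : Nat → Term F) (r₁' : Term F),
      (l₁, r₁) ∈ R₁ ∧ (l₂, r₂) ∈ R₂ ∧ IsRenaming ρ ∧
      SubtermAt r₁ p u ∧ ¬ u.IsVar ∧ IsMGU σ u (l₂.subst ρ) ∧
      ReplaceAt r₁ p (r₂.subst ρ) r₁' ∧ e = (l₁.subst σ, r₁'.subst σ) }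

def FCiter (R : TRS F) : Nat → TRS F
  | 0 => R
  | k + 1 => FCiter R k ∪ { e | e ∈ FStep (FCiter R k) R ∧ ¬ Redundant (FCiter R k) e }

def FCinf (R : TRS F) : TRS F := ⋃ k, FCiter R k

/-- Forward-closed, via the forward-closure construction: `FC(R) = R`. -/
def ForwardClosedFC (R : TRS F) : Prop := FCinf R = R

/-- `RHS(R)`: `R` together with the conclusions of right-hand-side critical
pair inferences (second rule renamed apart). -/
def RHSset (R : TRS F) : TRS F :=
  R ∪ { e | ∃ (s t u₀ v₀ : Term F) (ρ σ : Nat → Term F), (s, t) ∈ R ∧ (u₀, v₀) ∈ R ∧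
        IsRenaming ρ ∧ IsMGU σ t (v₀.subst ρ) ∧
        s.subst σ ≠ (u₀.subst ρ).subst σ ∧ e = (s.subst σ, (u₀.subst ρ).subst σ) }

/-- the (unordered) pairs of root symbols of two equations coincide -/
def RootPairSimilar (e₁ e₂ : Rule F) : Prop :=
  (e₁.1.root = e₂.1.root ∧ e₁.2.root = e₂.2.root) ∨
  (e₁.1.root = e₂.2.root ∧ e₁.2.root = e₂.1.root)

def QuasiDet (E : TRS F) : Prop :=
  (∀ e ∈ E, ¬ e.1.IsVar ∧ ¬ e.2.IsVar) ∧
  (∀ e ∈ E, e.1.root ≠ e.2.root) ∧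
  (∀ e₁ ∈ E, ∀ e₂ ∈ E, e₁ ≠ e₂ → ¬ RootPairSimilar e₁ e₂)

def HasRootPairRepetition (E : TRS F) : Prop :=
  ∃ e₁ ∈ E, ∃ e₂ ∈ E, e₁ ≠ e₂ ∧ RootPairSimilar e₁ e₂

def VarPreserving (R : TRS F) : Prop :=
  ∀ e ∈ R, ∀ n, n ∈ Term.varsL e.1 ↔ n ∈ Term.varsL e.2

def RightReduced (R : TRS F) : Prop := ∀ e ∈ R, NormalForm R e.2

def AlmostLeftReduced (R : TRS F) : Prop :=
  ¬ ∃ (l₁ r₁ l₂ r₂ : Term F) (p : List Nat) (u : Term F) (σ : Nat → Term F),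
      (l₁, r₁) ∈ R ∧ (l₂, r₂) ∈ R ∧ p ≠ [] ∧ SubtermAt l₁ p u ∧ u = l₂.subst σ

def NonSubtermCollapsing (R : TRS F) : Prop :=
  ¬ ∃ (t u : Term F) (p : List Nat), p ≠ [] ∧ SubtermAt u p t ∧ Conv R t u

structure LMSystem (R : TRS F) : Prop where
  convergent : Convergent R
  almostLeftReduced : AlmostLeftReduced R
  rightReduced : RightReduced R
  nonCollapsing : NonSubtermCollapsing R
  forwardClosed : FCclosed R
  quasiDet : QuasiDet (RHSset R)

/-- the symbol (function symbol or variable) of a term at a position, if defined -/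
def labelAt {F : Type} : List Nat → Term F → Option (F ⊕ Nat)
  | [], t => some t.label
  | i :: p, Term.app _ ts => (ts[i]?).bind (labelAt p)
  | _ :: _, Term.var _ => none

/-- outermost distinguishing position -/
def ODP (s t : Term F) (p : List Nat) : Prop :=
  (labelAt p s ≠ none ∨ labelAt p t ≠ none) ∧
  labelAt p s ≠ labelAt p t ∧
  ∀ q, q <+: p → q ≠ p → labelAt q s = labelAt q t

/-!
The backward direction is structural: where the root symbols differ the root is the only
outermost distinguishing position, and otherwise the arguments are treated recursively and
reassembled by congruence.

The forward direction rests on root stability: in an LM-system, once a step at the root has been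
made, no later step of the reduction is at the root. A reduction between terms with the same root
symbol therefore never touches the root and splits into reductions of the arguments.

Root stability is proved simultaneously with the fact that a rule instance under a normalised
substitution has a normal right-hand side, by well-founded induction along rewriting and the
subterm relation. By forward closure the normal form of a term is at most one root step away from
its argument-normalised reduct; every way this can go wrong produces either two equations of
`RHS(R)` with the same pair of root symbols, against quasi-determinism, or a reducible right-hand
side, against right-reducedness.
-/

open Relation

namespace Term

theorem ind {P : Term F → Prop} (var : ∀ n, P (var n))
    (app : ∀ f ts, (∀ t ∈ ts, P t) → P (app f ts)) : ∀ t, P t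
  | .var n => var n
  | .app f ts => app f ts fun t _ => ind var app t

@[simp] theorem subst_var (σ : Nat → Term F) (n : Nat) : (var n).subst σ = σ n := by
  simp [subst]

@[simp] theorem subst_app (σ : Nat → Term F) (f : F) (ts : List (Term F)) :
    (app f ts).subst σ = app f (ts.map (subst σ)) := by
  simp [subst]

@[simp] theorem varsL_var (n : Nat) : (var n : Term F).varsL = [n] := by simp [varsL]

@[simp] theorem varsL_app (f : F) (ts : List (Term F)) :
    (app f ts).varsL = ts.flatMap varsL := by
  simp [varsL, List.flatMap]

theorem subst_congr {α β : Nat → Term F} :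
    ∀ t : Term F, (∀ x ∈ t.varsL, α x = β x) → t.subst α = t.subst β := by
  refine ind (fun n h => by simpa using h) fun f ts ih h => ?_
  simp only [subst_app, app.injEq, true_and]
  exact List.map_congr_left fun u hu =>
    ih u hu fun x hx => h x (by simpa using ⟨u, hu, hx⟩)

theorem subst_subst (α β : Nat → Term F) :
    ∀ t : Term F, (t.subst α).subst β = t.subst fun x => (α x).subst β := by
  refine ind (fun n => by simp) fun f ts ih => ?_
  simpa using List.map_congr_left ih

@[simp] theorem subst_var_eq_self : ∀ t : Term F, t.subst var = t := by
  refine ind (fun n => by simp) fun f ts ih => ?_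
  simpa using List.map_congr_left ih

theorem mem_varsL_subst (σ : Nat → Term F) (x : Nat) :
    ∀ t : Term F, x ∈ (t.subst σ).varsL ↔ ∃ y ∈ t.varsL, x ∈ (σ y).varsL := by
  refine ind (fun n => by simp) fun f ts ih => ?_
  simp only [subst_app, varsL_app, List.flatMap_map, List.mem_flatMap]
  constructor
  · rintro ⟨u, hu, hx⟩
    obtain ⟨y, hy, hxy⟩ := (ih u hu).1 hx
    exact ⟨y, ⟨u, hu, hy⟩, hxy⟩
  · rintro ⟨y, ⟨u, hu, hy⟩, hxy⟩
    exact ⟨u, hu, (ih u hu).2 ⟨y, hy, hxy⟩⟩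

theorem label_subst {t : Term F} (ht : ¬ t.IsVar) (σ : Nat → Term F) :
    (t.subst σ).label = t.label := by
  cases t with
  | var n => exact absurd trivial ht
  | app f ts => simp [label]

theorem root_eq_of_label_eq {s t : Term F} (h : s.label = t.label) : s.root = t.root := by
  cases s <;> cases t <;> simp_all [label, root]

theorem eq_var_of_label_eq {t : Term F} {n : Nat} (h : t.label = Sum.inr n) : t = var n := by
  cases t <;> simp_all [label]

def tsize : Term F → Nat
  | var _ => 1
  | app _ ts => 1 + (ts.attach.map fun ⟨t, _⟩ => tsize t).sum

@[simp] theorem tsize_var (n : Nat) : tsize (var n : Term F) = 1 := by simp [tsize]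

@[simp] theorem tsize_app (f : F) (ts : List (Term F)) :
    tsize (app f ts) = 1 + (ts.map tsize).sum := by
  simp [tsize]

theorem tsize_lt_app_of_mem {f : F} {ts : List (Term F)} {u : Term F} (hu : u ∈ ts) :
    tsize u < tsize (app f ts) := by
  have := List.le_sum_of_mem (List.mem_map_of_mem (f := tsize) hu)
  simp only [tsize_app]
  omega

theorem tsize_le_subst (σ : Nat → Term F) (x : Nat) :
    ∀ t : Term F, x ∈ t.varsL → tsize (σ x) ≤ tsize (t.subst σ) := by
  refine ind (fun n h => by simp_all) fun f ts ih h => ?_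
  obtain ⟨u, hu, hx⟩ := List.mem_flatMap.1 (by simpa using h)
  rw [subst_app]
  exact ((ih u hu hx).trans_lt (tsize_lt_app_of_mem (List.mem_map_of_mem hu))).le

theorem tsize_lt_subst_app (σ : Nat → Term F) {x : Nat} {f : F} {ts : List (Term F)}
    (hx : x ∈ (app f ts).varsL) : tsize (σ x) < tsize ((app f ts).subst σ) := by
  obtain ⟨u, hu, hxu⟩ := List.mem_flatMap.1 (by simpa using hx)
  rw [subst_app]
  exact (tsize_le_subst σ x u hxu).trans_lt (tsize_lt_app_of_mem (List.mem_map_of_mem hu))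

end Term

theorem List.Forall₂.rel_of_getElem? {α β : Type*} {R : α → β → Prop} :
    ∀ {l₁ : List α} {l₂ : List β}, Forall₂ R l₁ l₂ →
      ∀ {i : Nat} {a : α} {b : β}, l₁[i]? = some a → l₂[i]? = some b → R a b
  | _, _, .nil, _, _, _, h, _ => by simp at h
  | _, _, .cons hab _, 0, _, _, ha, hb => by simp_all
  | _, _, .cons _ h, _ + 1, _, _, ha, hb =>
    h.rel_of_getElem? (by simpa using ha) (by simpa using hb)

theorem List.forall₂_of_getElem? {α β : Type*} {R : α → β → Prop} {l₁ : List α} {l₂ : List β}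
    (hlen : l₁.length = l₂.length)
    (h : ∀ (i : Nat) a b, l₁[i]? = some a → l₂[i]? = some b → R a b) : Forall₂ R l₁ l₂ :=
  List.forall₂_iff_get.2 ⟨hlen, fun i h₁ h₂ => h i _ _ (by simp [h₁]) (by simp [h₂])⟩

theorem List.Forall₂.trans_of {α : Type*} {R : α → α → Prop}
    (htrans : ∀ a b c, R a b → R b c → R a c) :
    ∀ {l₁ l₂ l₃ : List α}, Forall₂ R l₁ l₂ → Forall₂ R l₂ l₃ → Forall₂ R l₁ l₃
  | _, _, _, .nil, .nil => .nil
  | _, _, _, .cons h₁ t₁, .cons h₂ t₂ => .cons (htrans _ _ _ h₁ h₂) (t₁.trans_of htrans t₂)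

section Rewriting

variable {R : TRS F}

open Term

theorem StarRW.refl (t : Term F) : StarRW R t t := ReflTransGen.refl

theorem StarRW.trans {s t u : Term F} (h₁ : StarRW R s t) (h₂ : StarRW R t u) : StarRW R s u :=
  ReflTransGen.trans h₁ h₂

theorem StarRW.head {s t u : Term F} (h₁ : OneStep R s t) (h₂ : StarRW R t u) : StarRW R s u :=
  ReflTransGen.head h₁ h₂

theorem OneStep.starRW {s t : Term F} (h : OneStep R s t) : StarRW R s t := ReflTransGen.single h

theorem forall₂_starRW_refl (ts : List (Term F)) : List.Forall₂ (StarRW R) ts ts :=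
  List.forall₂_same.2 fun t _ => StarRW.refl t

theorem oneStep_subst {l r : Term F} (h : (l, r) ∈ R) (σ : Nat → Term F) :
    OneStep R (l.subst σ) (r.subst σ) :=
  ⟨(l, r), h, σ, [], .here _, .here _ _⟩

theorem RootStep.oneStep {s t : Term F} (h : RootStep R s t) : OneStep R s t := by
  obtain ⟨⟨l, r⟩, hlr, σ, rfl, rfl⟩ := h
  exact oneStep_subst hlr σ

theorem OneStep.app_set {u v : Term F} (h : OneStep R u v) (f : F) {ts : List (Term F)} {i : Nat}
    (hget : ts[i]? = some u) : OneStep R (app f ts) (app f (ts.set i v)) := by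
  obtain ⟨ρ, hρ, σ, p, hsub, hrep⟩ := h
  exact ⟨ρ, hρ, σ, i :: p, .there hget hsub, .there hget hrep⟩

theorem OneStep.app_append_cons {u v : Term F} (h : OneStep R u v) (f : F)
    (pre post : List (Term F)) :
    OneStep R (app f (pre ++ u :: post)) (app f (pre ++ v :: post)) := by
  simpa using h.app_set f (ts := pre ++ u :: post) (i := pre.length) (by simp)

theorem StarRW.app_append_cons {u v : Term F} (h : StarRW R u v) (f : F)
    (pre post : List (Term F)) :
    StarRW R (app f (pre ++ u :: post)) (app f (pre ++ v :: post)) :=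
  ReflTransGen.lift (fun w => app f (pre ++ w :: post))
    (fun _ _ hstep => OneStep.app_append_cons hstep f pre post) _ _ h

theorem starRW_app_of_forall₂ (f : F) {ss tt : List (Term F)}
    (h : List.Forall₂ (StarRW R) ss tt) : StarRW R (app f ss) (app f tt) := by
  suffices ∀ pre, StarRW R (app f (pre ++ ss)) (app f (pre ++ tt)) by simpa using this []
  induction h with
  | nil => exact fun _ => StarRW.refl _
  | @cons a b ss tt hab _ ih =>
    intro pre
    exact (hab.app_append_cons f pre ss).trans (by simpa using ih (pre ++ [b]))

theorem starRW_subst {α β : Nat → Term F} (h : ∀ x, StarRW R (α x) (β x)) :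
    ∀ t : Term F, StarRW R (t.subst α) (t.subst β) := by
  refine ind (fun n => by simpa using h n) fun f ts ih => ?_
  simp only [subst_app]
  exact starRW_app_of_forall₂ f
    (List.forall₂_map_left_iff.2 (List.forall₂_map_right_iff.2 (List.forall₂_same.2 ih)))

def NonRootStep (R : TRS F) (s t : Term F) : Prop :=
  ∃ f pre u v post, OneStep R u v ∧
    s = app f (pre ++ u :: post) ∧ t = app f (pre ++ v :: post)

def NonRootStar (R : TRS F) : Term F → Term F → Prop := ReflTransGen (NonRootStep R)

theorem NonRootStep.oneStep {s t : Term F} (h : NonRootStep R s t) : OneStep R s t := by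
  obtain ⟨f, pre, u, v, post, huv, rfl, rfl⟩ := h
  exact huv.app_append_cons f pre post

theorem NonRootStar.starRW {s t : Term F} (h : NonRootStar R s t) : StarRW R s t :=
  ReflTransGen.mono (fun _ _ => NonRootStep.oneStep) _ _ h

theorem NonRootStar.label_eq {s t : Term F} (h : NonRootStar R s t) : t.label = s.label := by
  induction h with
  | refl => rfl
  | tail _ hstep ih =>
    obtain ⟨f, pre, u, v, post, -, rfl, rfl⟩ := hstep
    exact ih

theorem NonRootStar.forall₂ {f : F} {ss : List (Term F)} {t : Term F}
    (h : NonRootStar R (app f ss) t) : ∃ tt, t = app f tt ∧ List.Forall₂ (StarRW R) ss tt := by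
  induction h with
  | refl => exact ⟨ss, rfl, forall₂_starRW_refl ss⟩
  | tail _ hstep ih =>
    obtain ⟨tt, rfl, hss⟩ := ih
    obtain ⟨g, pre, u, v, post, huv, heq, rfl⟩ := hstep
    obtain ⟨rfl, rfl⟩ := app.inj heq
    refine ⟨_, rfl, hss.trans_of (fun _ _ _ => StarRW.trans) ?_⟩
    exact List.rel_append (forall₂_starRW_refl pre) (.cons huv.starRW (forall₂_starRW_refl post))

theorem oneStep_cases {s t : Term F} (h : OneStep R s t) : RootStep R s t ∨ NonRootStep R s t := by
  obtain ⟨ρ, hρ, σ, p, hsub, hrep⟩ := h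
  generalize hL : ρ.1.subst σ = L at hsub
  generalize hL' : ρ.2.subst σ = L' at hrep
  cases hsub with
  | here => cases hrep with
    | here => exact .inl ⟨ρ, hρ, σ, hL.symm, hL'.symm⟩
  | @there f ts i u p _ hget hsub =>
    cases hrep with
    | there hget' hrep =>
      rw [hget] at hget'
      cases hget'
      obtain ⟨hi, rfl⟩ := List.getElem?_eq_some_iff.1 hget
      obtain ⟨pre, post, hts, -, hset⟩ := List.exists_of_set (a' := _) hi
      exact .inr ⟨f, pre, _, _, post, ⟨ρ, hρ, σ, p, hL ▸ hsub, hL' ▸ hrep⟩,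
        congrArg _ hts, congrArg _ hset⟩

theorem starRW_cases {s t : Term F} (h : StarRW R s t) :
    NonRootStar R s t ∨ ∃ m m', NonRootStar R s m ∧ RootStep R m m' ∧ StarRW R m' t := by
  induction h using ReflTransGen.head_induction_on with
  | refl => exact .inl .refl
  | @head s₀ s₁ hstep hrest ih =>
    rcases oneStep_cases hstep with hroot | hnr
    · exact .inr ⟨s₀, s₁, .refl, hroot, hrest⟩
    · rcases ih with h | ⟨m, m', h₁, h₂, h₃⟩
      · exact .inl (.head hnr h)
      · exact .inr ⟨m, m', .head hnr h₁, h₂, h₃⟩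

theorem NormalForm.eq_of_starRW {s t : Term F} (hs : NormalForm R s) (h : StarRW R s t) :
    t = s := by
  rcases ReflTransGen.cases_head h with rfl | ⟨u, hsu, -⟩
  · rfl
  · exact absurd hsu (hs u)

theorem NormalForm.of_mem_args {f : F} {ss : List (Term F)} (h : NormalForm R (app f ss))
    {u : Term F} (hu : u ∈ ss) : NormalForm R u := by
  obtain ⟨pre, post, rfl⟩ := List.append_of_mem hu
  exact fun v huv => h _ (huv.app_append_cons f pre post)

theorem NormalForm.subtermAt {t u : Term F} {p : List Nat} (ht : NormalForm R t)
    (h : SubtermAt t p u) : NormalForm R u := by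
  induction h with
  | here => exact ht
  | there hget _ ih => exact ih (ht.of_mem_args (List.mem_of_getElem? hget))

theorem Terminating.exists_nfOf (h : Terminating R) (t : Term F) : ∃ n, NFof R t n := by
  induction t using h.induction with
  | _ t ih =>
    by_cases ht : NormalForm R t
    · exact ⟨t, StarRW.refl t, ht⟩
    · obtain ⟨u, hu⟩ := not_forall_not.1 ht
      obtain ⟨n, hun, hn⟩ := ih u hu
      exact ⟨n, .head hu hun, hn⟩

theorem Confluent.starRW_of_nfOf (hc : Confluent R) {s t n : Term F} (hn : NFof R s n)
    (h : StarRW R s t) : StarRW R t n := by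
  obtain ⟨z, hnz, htz⟩ := hc s n t hn.1 h
  rwa [hn.2.eq_of_starRW hnz] at htz

end Rewriting

section Positions

open Term

theorem subtermAt_nil_iff {s u : Term F} : SubtermAt s [] u ↔ u = s := by
  constructor
  · rintro ⟨⟩; rfl
  · rintro rfl; exact .here _

theorem subtermAt_app_cons_iff {f : F} {ss : List (Term F)} {i : Nat} {p : List Nat}
    {w : Term F} : SubtermAt (app f ss) (i :: p) w ↔ ∃ u, ss[i]? = some u ∧ SubtermAt u p w := by
  constructor
  · rintro (_ | ⟨hget, hsub⟩); exact ⟨_, hget, hsub⟩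
  · rintro ⟨u, hget, hsub⟩; exact .there hget hsub

theorem SubtermAt.of_app_cons {f : F} {ss : List (Term F)} {i : Nat} {p : List Nat}
    {u w : Term F} (h : SubtermAt (app f ss) (i :: p) w) (hu : ss[i]? = some u) :
    SubtermAt u p w := by
  obtain ⟨u', hu', hw⟩ := subtermAt_app_cons_iff.1 h
  obtain rfl : u' = u := Option.some.inj (hu'.symm.trans hu)
  exact hw

theorem SubtermAt.lt_length {f : F} {ss : List (Term F)} {i : Nat} {p : List Nat} {w : Term F}
    (h : SubtermAt (app f ss) (i :: p) w) : i < ss.length := by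
  obtain ⟨_, hu, -⟩ := subtermAt_app_cons_iff.1 h
  exact (List.getElem?_eq_some_iff.1 hu).1

theorem labelAt_app_cons (f : F) (ss : List (Term F)) (i : Nat) (p : List Nat) :
    labelAt (i :: p) (app f ss) = ss[i]?.bind (labelAt p) := rfl

theorem ODP.ne {s t : Term F} {p : List Nat} (h : ODP s t p) : s ≠ t := by
  rintro rfl; exact h.2.1 rfl

theorem ODP.label_eq {s t : Term F} {i : Nat} {p : List Nat} (h : ODP s t (i :: p)) :
    s.label = t.label :=
  Option.some.inj (h.2.2 [] (List.nil_prefix) (List.cons_ne_nil i p).symm)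

theorem odp_nil_of_label_ne {s t : Term F} (h : s.label ≠ t.label) : ODP s t [] :=
  ⟨.inl (by simp [labelAt]), by simpa [labelAt] using h,
    fun q hq hne => absurd (List.prefix_nil.1 hq) hne⟩

theorem ODP.of_app_cons {f g : F} {ss tt : List (Term F)} {i : Nat} {p : List Nat}
    (h : ODP (app f ss) (app g tt) (i :: p)) (hlen : ss.length = tt.length) :
    ∃ u v, ss[i]? = some u ∧ tt[i]? = some v ∧ ODP u v p := by
  obtain ⟨hdef, hne, hpre⟩ := h
  rcases hu : ss[i]? with _ | u
  · have hv : tt[i]? = none := by simp_all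
    simp [labelAt_app_cons, hu, hv] at hdef
  obtain ⟨v, hv⟩ : ∃ v, tt[i]? = some v := by
    simpa [List.getElem?_eq_some_iff, ← hlen] using (List.getElem?_eq_some_iff.1 hu).1
  refine ⟨u, v, rfl, hv, ?_, ?_, fun q hq hqp => ?_⟩
  · simpa [labelAt_app_cons, hu, hv] using hdef
  · simpa [labelAt_app_cons, hu, hv] using hne
  · simpa [labelAt_app_cons, hu, hv] using
      hpre (i :: q) (List.cons_prefix_cons.2 ⟨rfl, hq⟩) (by simpa using hqp)

theorem ODP.app_cons {f : F} {ss tt : List (Term F)} {i : Nat} {p : List Nat} {u v : Term F}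
    (h : ODP u v p) (hu : ss[i]? = some u) (hv : tt[i]? = some v) :
    ODP (app f ss) (app f tt) (i :: p) := by
  obtain ⟨hdef, hne, hpre⟩ := h
  refine ⟨by simpa [labelAt_app_cons, hu, hv] using hdef,
    by simpa [labelAt_app_cons, hu, hv] using hne, fun q hq hqp => ?_⟩
  rcases List.prefix_cons_iff.1 hq with rfl | ⟨q, rfl, hq⟩
  · rfl
  · simpa [labelAt_app_cons, hu, hv] using
      hpre q (List.cons_prefix_cons.1 hq).2 (by simpa using hqp)

theorem odp_min_length {f : F} {ss tt : List (Term F)} (h : ss.length ≠ tt.length) :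
    ODP (app f ss) (app f tt) [min ss.length tt.length] := by
  refine ⟨?_, ?_, fun q hq hqp => ?_⟩
  · rcases Nat.lt_or_gt_of_ne h with h | h <;> simp [labelAt, h, h.le]
  · rcases Nat.lt_or_gt_of_ne h with h | h <;> simp [labelAt, h, h.le]
  · rcases List.prefix_cons_iff.1 hq with rfl | ⟨q, rfl, hq⟩
    · rfl
    · exact absurd (by simpa using hq) hqp

theorem starRW_of_label_ne {R : TRS F} {s t : Term F}
    (h : ∀ p, ODP s t p → ∃ u v, SubtermAt s p u ∧ SubtermAt t p v ∧ StarRW R u v)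
    (hl : s.label ≠ t.label) : StarRW R s t := by
  obtain ⟨u, v, hu, hv, huv⟩ := h [] (odp_nil_of_label_ne hl)
  rwa [subtermAt_nil_iff.1 hu, subtermAt_nil_iff.1 hv] at huv

theorem starRW_of_forall_odp {R : TRS F} (s t : Term F)
    (h : ∀ p, ODP s t p → ∃ u v, SubtermAt s p u ∧ SubtermAt t p v ∧ StarRW R u v) :
    StarRW R s t := by
  induction s using Term.ind generalizing t with
  | var n =>
    by_cases hl : (var n).label = t.label
    · rw [eq_var_of_label_eq hl.symm]; exact StarRW.refl _
    · exact starRW_of_label_ne h hl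
  | app f ss ih =>
    by_cases hl : (app f ss).label = t.label
    swap
    · exact starRW_of_label_ne h hl
    obtain ⟨tt, rfl⟩ : ∃ tt, t = app f tt := by
      cases t <;> simp_all [label]
    have hlen : ss.length = tt.length := by
      by_contra hne
      obtain ⟨u, v, hu, hv, -⟩ := h _ (odp_min_length hne)
      have := hu.lt_length
      have := hv.lt_length
      omega
    refine starRW_app_of_forall₂ f (List.forall₂_of_getElem? hlen fun i u v hu hv => ?_)
    refine ih u (List.mem_of_getElem? hu) v fun p hp => ?_
    obtain ⟨U, V, hU, hV, hUV⟩ := h _ (hp.app_cons hu hv)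
    exact ⟨U, V, hU.of_app_cons hu, hV.of_app_cons hv, hUV⟩

end Positions

section Below

variable {R : TRS F}

open Term

def BelowStep (R : TRS F) (a b : Term F) : Prop :=
  OneStep R b a ∨ ∃ f ss, b = app f ss ∧ a ∈ ss

def Below (R : TRS F) : Term F → Term F → Prop := TransGen (BelowStep R)

theorem SubtermAt.append {t u v : Term F} {p q : List Nat} (h : SubtermAt t p u)
    (h' : SubtermAt u q v) : SubtermAt t (p ++ q) v := by
  induction h with
  | here => exact h'
  | there hget _ ih => exact .there hget (ih h')

theorem SubtermAt.exists_oneStep {t u v : Term F} {p : List Nat} (h : SubtermAt t p u)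
    (huv : OneStep R u v) : ∃ t', OneStep R t t' ∧ SubtermAt t' p v := by
  induction h with
  | here => exact ⟨v, huv, .here v⟩
  | there hget _ ih =>
    obtain ⟨w, hw, hsub⟩ := ih huv
    have hi := (List.getElem?_eq_some_iff.1 hget).1
    exact ⟨_, hw.app_set _ hget, .there (List.getElem?_set_self hi) hsub⟩

theorem acc_belowStep_of_subtermAt (h : Terminating R) (t : Term F) :
    ∀ u p, SubtermAt t p u → Acc (BelowStep R) u := by
  induction t using h.induction with
  | _ t ihstep =>
    intro u
    induction u using Term.ind with
    | var n =>
      intro p hsub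
      refine ⟨_, fun z hz => ?_⟩
      rcases hz with hz | ⟨f, ss, heq, -⟩
      · obtain ⟨t', ht', hsub'⟩ := hsub.exists_oneStep hz
        exact ihstep t' ht' z p hsub'
      · cases heq
    | app f ts ihargs =>
      intro p hsub
      refine ⟨_, fun z hz => ?_⟩
      rcases hz with hz | ⟨f', ss, heq, hz⟩
      · obtain ⟨t', ht', hsub'⟩ := hsub.exists_oneStep hz
        exact ihstep t' ht' z p hsub'
      · obtain ⟨rfl, rfl⟩ := app.inj heq
        obtain ⟨i, hi⟩ := List.getElem?_of_mem hz
        exact ihargs z hz (p ++ [i]) (hsub.append (.there hi (.here z)))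

theorem Terminating.wellFounded_below (h : Terminating R) : WellFounded (Below R) :=
  WellFounded.transGen ⟨fun t => acc_belowStep_of_subtermAt h t t [] (.here t)⟩

theorem StarRW.belowStep {s t : Term F} (h : StarRW R s t) : ReflTransGen (BelowStep R) t s := by
  induction h with
  | refl => exact .refl
  | tail _ hstep ih => exact .head (.inl hstep) ih

theorem belowStep_of_mem {f : F} {ss : List (Term F)} {u : Term F} (hu : u ∈ ss) :
    BelowStep R u (app f ss) :=
  .inr ⟨f, ss, rfl, hu⟩

theorem OneStep.below {U v z : Term F} (h : OneStep R U v) (hz : ReflTransGen (BelowStep R) z v) :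
    Below R z U :=
  TransGen.tail' hz (.inl h)

theorem StarRW.below_of_ne {s t : Term F} (h : StarRW R s t) (hne : s ≠ t) : Below R t s := by
  rcases ReflTransGen.cases_head h with rfl | ⟨u, hsu, hut⟩
  · exact absurd rfl hne
  · exact hsu.below (StarRW.belowStep hut)

end Below

section Unification

open Term

def UnifiesAll (σ : Nat → Term F) (P : List (Term F × Term F)) : Prop :=
  ∀ e ∈ P, Unifies σ e.1 e.2

def IsMGUAll (σ : Nat → Term F) (P : List (Term F × Term F)) : Prop :=
  UnifiesAll σ P ∧ ∀ τ, UnifiesAll τ P → ∃ δ, ∀ x, τ x = (σ x).subst δ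

def problemVars (P : List (Term F × Term F)) : List Nat :=
  P.flatMap fun e => e.1.varsL ++ e.2.varsL

def problemSize (P : List (Term F × Term F)) : Nat :=
  (P.map fun e => tsize e.1 + tsize e.2).sum

def Term.single (x : Nat) (t : Term F) : Nat → Term F := fun z => if z = x then t else var z

def substProblem (σ : Nat → Term F) (P : List (Term F × Term F)) : List (Term F × Term F) :=
  P.map fun e => (e.1.subst σ, e.2.subst σ)

theorem unifiesAll_cons_iff {τ : Nat → Term F} {s t : Term F} {P : List (Term F × Term F)} :
    UnifiesAll τ ((s, t) :: P) ↔ s.subst τ = t.subst τ ∧ UnifiesAll τ P := by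
  simp [UnifiesAll, Unifies]

theorem IsMGUAll.of_iff {σ : Nat → Term F} {P Q : List (Term F × Term F)} (hσ : IsMGUAll σ P)
    (h : ∀ τ, UnifiesAll τ P ↔ UnifiesAll τ Q) : IsMGUAll σ Q :=
  ⟨(h σ).1 hσ.1, fun τ hτ => hσ.2 τ ((h τ).2 hτ)⟩

theorem subst_single_subst {τ : Nat → Term F} {x : Nat} {t : Term F} (hx : τ x = t.subst τ)
    (u : Term F) : (u.subst (single x t)).subst τ = u.subst τ := by
  rw [subst_subst]
  refine subst_congr u fun z _ => ?_
  by_cases hz : z = x <;> simp [single, hz, hx]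

theorem unifiesAll_substProblem_single_iff {τ : Nat → Term F} {x : Nat} {t : Term F}
    (hx : τ x = t.subst τ) {P : List (Term F × Term F)} :
    UnifiesAll τ (substProblem (single x t) P) ↔ UnifiesAll τ P := by
  simp only [UnifiesAll, substProblem, List.forall_mem_map, Unifies, subst_single_subst hx]

theorem IsMGUAll.cons_var {σ : Nat → Term F} {x : Nat} {t : Term F} {P : List (Term F × Term F)}
    (hx : x ∉ t.varsL) (hσ : IsMGUAll σ (substProblem (single x t) P)) :
    IsMGUAll (fun z => (single x t z).subst σ) ((var x, t) :: P) := by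
  have ht : t.subst (single x t) = t := by
    conv_rhs => rw [← subst_var_eq_self t]
    exact subst_congr t fun z hz => by simp [single, show z ≠ x from fun h => hx (h ▸ hz)]
  have hsubst : ∀ u : Term F, u.subst (fun z => (single x t z).subst σ) =
      (u.subst (single x t)).subst σ := fun u => (subst_subst _ _ u).symm
  refine ⟨unifiesAll_cons_iff.2 ⟨?_, ?_⟩, fun τ hτ => ?_⟩
  · rw [hsubst t, ht]; simp [single]
  · intro e he
    rw [Unifies, hsubst, hsubst]
    exact hσ.1 _ (List.mem_map_of_mem he)
  · obtain ⟨hτx, hτP⟩ := unifiesAll_cons_iff.1 hτ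
    obtain ⟨δ, hδ⟩ := hσ.2 τ ((unifiesAll_substProblem_single_iff (by simpa using hτx)).2 hτP)
    refine ⟨δ, fun z => ?_⟩
    rw [subst_subst, ← funext hδ]
    by_cases hz : z = x <;> simp_all [single]

theorem unifiesAll_swap_iff {τ : Nat → Term F} {s t : Term F} {P : List (Term F × Term F)} :
    UnifiesAll τ ((s, t) :: P) ↔ UnifiesAll τ ((t, s) :: P) := by
  simp only [unifiesAll_cons_iff, eq_comm]

theorem unifiesAll_decompose_iff {τ : Nat → Term F} {f : F} {ss tt : List (Term F)}
    (hlen : ss.length = tt.length) {P : List (Term F × Term F)} :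
    UnifiesAll τ ((app f ss, app f tt) :: P) ↔ UnifiesAll τ (ss.zip tt ++ P) := by
  have hmap : ss.map (subst τ) = tt.map (subst τ) ↔
      ∀ a b, (a, b) ∈ ss.zip tt → a.subst τ = b.subst τ := by
    rw [← List.forall₂_eq_eq_eq, List.forall₂_map_left_iff, List.forall₂_map_right_iff,
      List.forall₂_iff_zip]
    exact ⟨fun h a b hab => h.2 hab, fun h => ⟨hlen, fun hab => h _ _ hab⟩⟩
  simp only [unifiesAll_cons_iff, subst_app, app.injEq, true_and, hmap]
  simp [UnifiesAll, Unifies, or_imp, forall_and]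

theorem not_unifies_of_mem_varsL {τ : Nat → Term F} {x : Nat} {t : Term F} (hx : x ∈ t.varsL)
    (ht : t ≠ var x) : τ x ≠ t.subst τ := by
  cases t with
  | var y => simp_all
  | app f ts => exact (tsize_lt_subst_app τ hx).ne'.symm ∘ congrArg tsize

theorem mem_problemVars {P : List (Term F × Term F)} {z : Nat} :
    z ∈ problemVars P ↔ ∃ e ∈ P, z ∈ e.1.varsL ∨ z ∈ e.2.varsL := by
  simp [problemVars]

theorem mem_problemVars_cons {e : Term F × Term F} {P : List (Term F × Term F)} {z : Nat}
    (hz : z ∈ problemVars P) : z ∈ problemVars (e :: P) := by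
  simp_all [problemVars]

theorem mem_problemVars_substProblem {σ : Nat → Term F} {P : List (Term F × Term F)} {z : Nat} :
    z ∈ problemVars (substProblem σ P) ↔ ∃ y ∈ problemVars P, z ∈ (σ y).varsL := by
  simp only [mem_problemVars, substProblem, List.mem_map]
  constructor
  · rintro ⟨_, ⟨e, he, rfl⟩, hz | hz⟩ <;> obtain ⟨y, hy, hzy⟩ := (mem_varsL_subst _ _ _).1 hz
    exacts [⟨y, ⟨e, he, .inl hy⟩, hzy⟩, ⟨y, ⟨e, he, .inr hy⟩, hzy⟩]
  · rintro ⟨y, ⟨e, he, hy | hy⟩, hz⟩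
    exacts [⟨_, ⟨e, he, rfl⟩, .inl ((mem_varsL_subst _ _ _).2 ⟨y, hy, hz⟩)⟩,
      ⟨_, ⟨e, he, rfl⟩, .inr ((mem_varsL_subst _ _ _).2 ⟨y, hy, hz⟩)⟩]

theorem card_problemVars_substProblem_lt {x : Nat} {t : Term F} {P Q : List (Term F × Term F)}
    (hx : x ∉ t.varsL) (hQ : ∀ z, z ∈ problemVars ((var x, t) :: P) → z ∈ problemVars Q) :
    (problemVars (substProblem (single x t) P)).toFinset.card < (problemVars Q).toFinset.card := by
  have hsub : (problemVars (substProblem (single x t) P)).toFinset ⊆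
      (problemVars Q).toFinset.erase x := by
    intro z hz
    obtain ⟨y, hy, hzy⟩ := mem_problemVars_substProblem.1 (List.mem_toFinset.1 hz)
    refine Finset.mem_erase.2 ⟨?_, List.mem_toFinset.2 (hQ z ?_)⟩ <;> by_cases hyx : y = x <;>
      simp_all [single, problemVars]
    exact fun h => hx (h ▸ hzy)
  exact (Finset.card_le_card hsub).trans_lt
    (Finset.card_erase_lt_of_mem (List.mem_toFinset.2 (hQ x (by simp [problemVars]))))

theorem problemVars_zip_subset {f : F} {ss tt : List (Term F)} {P : List (Term F × Term F)}
    {z : Nat} (hz : z ∈ problemVars (ss.zip tt ++ P)) :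
    z ∈ problemVars ((app f ss, app f tt) :: P) := by
  simp only [mem_problemVars, List.mem_append, List.mem_cons] at hz ⊢
  obtain ⟨e, he | he, hz⟩ := hz
  · have := List.of_mem_zip he
    refine ⟨_, .inl rfl, ?_⟩
    simp only [varsL_app, List.mem_flatMap]
    exact hz.imp (fun h => ⟨_, this.1, h⟩) (fun h => ⟨_, this.2, h⟩)
  · exact ⟨e, .inr he, hz⟩

theorem problemSize_zip_lt {f : F} {ss tt : List (Term F)} (hlen : ss.length = tt.length)
    (P : List (Term F × Term F)) :
    problemSize (ss.zip tt ++ P) < problemSize ((app f ss, app f tt) :: P) := by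
  have : ((ss.zip tt).map fun e => tsize e.1 + tsize e.2).sum =
      (ss.map tsize).sum + (tt.map tsize).sum := by
    rw [List.sum_map_add, show (fun e : Term F × Term F => tsize e.1) = tsize ∘ Prod.fst from rfl,
      show (fun e : Term F × Term F => tsize e.2) = tsize ∘ Prod.snd from rfl, ← List.map_map,
      ← List.map_map (f := Prod.snd), List.map_fst_zip hlen.le, List.map_snd_zip hlen.ge]
  simp only [problemSize, List.map_append, List.sum_append, this, List.map_cons, List.sum_cons,
    tsize_app]
  omega

theorem card_problemVars_le {P Q : List (Term F × Term F)}
    (h : ∀ z ∈ problemVars P, z ∈ problemVars Q) :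
    (problemVars P).toFinset.card ≤ (problemVars Q).toFinset.card :=
  Finset.card_le_card fun z hz => List.mem_toFinset.2 (h z (List.mem_toFinset.1 hz))

theorem prod_lex_of_le_of_lt {a b c d : Nat} (h₁ : a ≤ c) (h₂ : b < d) :
    Prod.Lex (· < ·) (· < ·) (a, b) (c, d) := by
  rcases h₁.lt_or_eq with h | rfl
  exacts [.left _ _ h, .right _ h₂]

theorem exists_isMGUAll : ∀ P : List (Term F × Term F), (∃ μ, UnifiesAll μ P) → ∃ σ, IsMGUAll σ P
  | [], _ => ⟨var, by simp [UnifiesAll], fun τ _ => ⟨τ, by simp⟩⟩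
  | (var x, t) :: P, ⟨μ, hμ⟩ => by
    obtain ⟨hμx, hμP⟩ := unifiesAll_cons_iff.1 hμ
    by_cases hxt : x ∈ t.varsL
    · by_cases ht : t = var x
      · subst ht
        obtain ⟨σ, hσ⟩ := exists_isMGUAll P ⟨μ, hμP⟩
        exact ⟨σ, hσ.of_iff fun τ => by simp [unifiesAll_cons_iff]⟩
      · exact absurd (by simpa using hμx) (not_unifies_of_mem_varsL hxt ht)
    · obtain ⟨σ, hσ⟩ := exists_isMGUAll (substProblem (single x t) P)
        ⟨μ, (unifiesAll_substProblem_single_iff (by simpa using hμx)).2 hμP⟩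
      exact ⟨_, hσ.cons_var hxt⟩
  | (app f ss, var x) :: P, ⟨μ, hμ⟩ => by
    obtain ⟨hμx, hμP⟩ := unifiesAll_cons_iff.1 hμ
    by_cases hxs : x ∈ (app f ss).varsL
    · exact absurd (by simpa using hμx.symm) (not_unifies_of_mem_varsL hxs (by simp))
    · obtain ⟨σ, hσ⟩ := exists_isMGUAll (substProblem (single x (app f ss)) P)
        ⟨μ, (unifiesAll_substProblem_single_iff (by simpa using hμx.symm)).2 hμP⟩
      exact ⟨_, (hσ.cons_var hxs).of_iff fun τ => unifiesAll_swap_iff⟩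
  | (app f ss, app g tt) :: P, ⟨μ, hμ⟩ => by
    obtain ⟨hμft, -⟩ := unifiesAll_cons_iff.1 hμ
    obtain ⟨rfl, hmap⟩ := app.inj (by simpa using hμft)
    have hlen : ss.length = tt.length := by simpa using congrArg List.length hmap
    obtain ⟨σ, hσ⟩ := exists_isMGUAll (ss.zip tt ++ P)
      ⟨μ, (unifiesAll_decompose_iff hlen).1 hμ⟩
    exact ⟨σ, hσ.of_iff fun τ => (unifiesAll_decompose_iff hlen).symm⟩
termination_by P => ((problemVars P).toFinset.card, problemSize P)
decreasing_by
  · subst ht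
    exact prod_lex_of_le_of_lt (card_problemVars_le fun _ => mem_problemVars_cons)
      (by simp [problemSize])
  · exact .left _ _ (card_problemVars_substProblem_lt hxt fun _ => id)
  · exact .left _ _ (card_problemVars_substProblem_lt hxs fun z hz => by
      simpa [mem_problemVars, or_comm] using hz)
  · obtain rfl : f = g := ‹_›
    exact prod_lex_of_le_of_lt (card_problemVars_le fun _ => problemVars_zip_subset)
      (problemSize_zip_lt hlen P)

theorem exists_isMGU {s t : Term F} {μ : Nat → Term F} (h : Unifies μ s t) : ∃ σ, IsMGU σ s t := by
  obtain ⟨σ, hσ, hgen⟩ := exists_isMGUAll [(s, t)] ⟨μ, by simpa [UnifiesAll] using h⟩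
  exact ⟨σ, by simpa [UnifiesAll] using hσ, fun τ hτ => hgen τ (by simpa [UnifiesAll] using hτ)⟩

end Unification

section LMSystem

variable {R : TRS F}

open Term

theorem QuasiDet.eq_of_label_eq {E : TRS F} (hqd : QuasiDet E) {e₁ e₂ : Rule F} (h₁ : e₁ ∈ E)
    (h₂ : e₂ ∈ E) (hl : e₁.1.label = e₂.1.label) (hr : e₁.2.label = e₂.2.label) : e₁ = e₂ :=
  by_contra fun hne =>
    hqd.2.2 e₁ h₁ e₂ h₂ hne (.inl ⟨root_eq_of_label_eq hl, root_eq_of_label_eq hr⟩)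

theorem QuasiDet.eq_of_label_eq_swap {E : TRS F} (hqd : QuasiDet E) {e₁ e₂ : Rule F} (h₁ : e₁ ∈ E)
    (h₂ : e₂ ∈ E) (hl : e₁.1.label = e₂.2.label) (hr : e₁.2.label = e₂.1.label) : e₁ = e₂ :=
  by_contra fun hne =>
    hqd.2.2 e₁ h₁ e₂ h₂ hne (.inr ⟨root_eq_of_label_eq hl, root_eq_of_label_eq hr⟩)

theorem QuasiDet.label_subst_lhs (hqd : QuasiDet (RHSset R)) {l r : Term F} (h : (l, r) ∈ R)
    (σ : Nat → Term F) : (l.subst σ).label = l.label :=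
  label_subst (hqd.1 _ (.inl h)).1 σ

theorem QuasiDet.label_subst_rhs (hqd : QuasiDet (RHSset R)) {l r : Term F} (h : (l, r) ∈ R)
    (σ : Nat → Term F) : (r.subst σ).label = r.label :=
  label_subst (hqd.1 _ (.inl h)).2 σ

theorem QuasiDet.label_ne (hqd : QuasiDet (RHSset R)) {l r : Term F} (h : (l, r) ∈ R) :
    l.label ≠ r.label :=
  fun hlr => hqd.2.1 _ (.inl h) (root_eq_of_label_eq hlr)

theorem RootStep.label_ne (hqd : QuasiDet (RHSset R)) {s t : Term F} (h : RootStep R s t) :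
    s.label ≠ t.label := by
  obtain ⟨⟨l, r⟩, hlr, σ, rfl, rfl⟩ := h
  rw [hqd.label_subst_lhs hlr, hqd.label_subst_rhs hlr]
  exact hqd.label_ne hlr

theorem exists_mem_rhsSet (hqd : QuasiDet (RHSset R)) {s t u v : Term F} (hst : (s, t) ∈ R)
    (huv : (u, v) ∈ R) (hlabel : s.label ≠ u.label) {θ θ' : Nat → Term F}
    (h : t.subst θ = v.subst θ') : ∃ ζ ζ', (s.subst ζ, u.subst ζ') ∈ RHSset R := by
  obtain ⟨K, hK⟩ : ∃ K, ∀ x ∈ t.varsL, x < K :=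
    ⟨t.varsL.sum + 1, fun x hx => Nat.lt_succ_of_le (List.le_sum_of_mem hx)⟩
  let ρ : Nat → Term F := fun z => var (z + K)
  have hρ : IsRenaming ρ := ⟨(· + K), add_left_injective K, fun _ => rfl⟩
  have hunif : Unifies (fun z => if z < K then θ z else θ' (z - K)) t (v.subst ρ) := by
    rw [Unifies, subst_subst]
    calc t.subst _ = t.subst θ := subst_congr t fun z hz => by simp [hK z hz]
      _ = v.subst θ' := h
      _ = _ := subst_congr v fun z _ => by simp [ρ]
  obtain ⟨μ, hμ⟩ := exists_isMGU hunif
  refine ⟨μ, fun z => (ρ z).subst μ,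
    .inr ⟨s, t, u, v, ρ, μ, hst, huv, hρ, hμ, fun heq => hlabel ?_, by rw [subst_subst]⟩⟩
  have := congrArg label heq
  rwa [subst_subst, hqd.label_subst_lhs hst, hqd.label_subst_lhs huv] at this

theorem Terminating.exists_epsIrreducible (h : Terminating R) (u : Term F) :
    ∃ ū, StarRW R u ū ∧ ū.label = u.label ∧ EpsIrreducible R ū := by
  cases u with
  | var n => exact ⟨var n, .refl _, rfl, fun p w hw hp => by cases hw; exact absurd rfl hp⟩
  | app f ss =>
    choose N hN using h.exists_nfOf
    refine ⟨app f (ss.map N), starRW_app_of_forall₂ f ?_, rfl, fun p w hw hp => ?_⟩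
    · exact List.forall₂_map_right_iff.2 (List.forall₂_same.2 fun t _ => (hN t).1)
    obtain _ | ⟨i, p⟩ := p
    · exact absurd rfl hp
    obtain ⟨w₀, hget, hsub⟩ := subtermAt_app_cons_iff.1 hw
    obtain ⟨t, -, rfl⟩ := List.mem_map.1 (List.mem_of_getElem? hget)
    exact (hN t).2.subtermAt hsub

theorem FCclosed.eq_or_rootStep (hfc : FCclosed R) {u n : Term F} (hu : EpsIrreducible R u)
    (hn : NFof R u n) : n = u ∨ RootStep R u n := by
  by_cases hnf : NormalForm R u
  · exact .inl (hnf.eq_of_starRW hn.1)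
  refine .inr ((oneStep_cases (hfc u ⟨hu, hnf⟩ n hn)).resolve_right ?_)
  rintro ⟨f, pre, w, w', post, hw, rfl, -⟩
  exact hu [pre.length] w (.there (by simp) (.here w)) (by simp) w' hw

theorem FCclosed.label_eq_or_eq_rhs_subst (hfc : FCclosed R) (hconv : Convergent R)
    (hqd : QuasiDet (RHSset R)) {U n : Term F} (hn : NFof R U n) :
    n.label = U.label ∨ ∃ A B θ, (A, B) ∈ R ∧ A.label = U.label ∧ n = B.subst θ := by
  obtain ⟨ū, hUū, hūlabel, hū⟩ := hconv.2.exists_epsIrreducible U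
  rcases hfc.eq_or_rootStep hū ⟨hconv.1.starRW_of_nfOf hn hUū, hn.2⟩ with
    rfl | ⟨⟨A, B⟩, hAB, θ, hūA, rfl⟩
  · exact .inl hūlabel
  · exact .inr ⟨A, B, θ, hAB, by rw [← hūlabel, hūA, hqd.label_subst_lhs hAB], rfl⟩

end LMSystem

section RootStability

variable {R : TRS F}

open Term

def RootStable (R : TRS F) (U : Term F) : Prop :=
  ∀ U' w w', RootStep R U U' → NonRootStar R U' w → ¬ RootStep R w w'

def RhsNormalAt (R : TRS F) (U : Term F) : Prop :=
  ∀ l r σ, (l, r) ∈ R → U = l.subst σ → (∀ x, NormalForm R (σ x)) → NormalForm R (r.subst σ)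

theorem RootStable.nonRootStar {U U' w : Term F} (h : RootStable R U) (hU : RootStep R U U')
    (hw : StarRW R U' w) : NonRootStar R U' w :=
  (starRW_cases hw).elim id fun ⟨m, m', hm, hmm', _⟩ => absurd hmm' (h U' m m' hU hm)

theorem RootStable.label_ne (hqd : QuasiDet (RHSset R)) {U U' w : Term F} (h : RootStable R U)
    (hU : RootStep R U U') (hw : StarRW R U' w) : w.label ≠ U.label := by
  rw [(h.nonRootStar hU hw).label_eq]
  exact (hU.label_ne hqd).symm

theorem subst_eq_of_starRW (hqd : QuasiDet (RHSset R)) {σ θ : Nat → Term F}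
    (hσ : ∀ x, NormalForm R (σ x)) (w : Term F)
    (hstable : ∀ y, ReflTransGen (BelowStep R) y (w.subst σ) → RootStable R y)
    (h : StarRW R (w.subst σ) (w.subst θ)) : w.subst σ = w.subst θ := by
  induction w using Term.ind with
  | var x => simpa using ((hσ x).eq_of_starRW (by simpa using h)).symm
  | app f ws ih =>
    rcases starRW_cases h with hnr | ⟨y, y', hy, hyy', hy'⟩
    · simp only [subst_app] at hnr ⊢
      obtain ⟨tt, htt, hargs⟩ := hnr.forall₂
      obtain ⟨-, rfl⟩ := app.inj htt
      have hargs := List.forall₂_same.1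
        (List.forall₂_map_left_iff.1 (List.forall₂_map_right_iff.1 hargs))
      refine congrArg (app f) (List.map_congr_left fun t ht => ?_)
      refine ih t ht (fun y hy => hstable y (hy.tail ?_)) (hargs t ht)
      simpa using belowStep_of_mem (List.mem_map_of_mem ht)
    · refine absurd ?_ ((hstable y hy.starRW.belowStep).label_ne hqd hyy' hy')
      rw [hy.label_eq]
      simp [label]

theorem exists_nf_eq_rhs_subst (hqd : QuasiDet (RHSset R)) (hconv : Convergent R)
    {y y' n : Term F} (hyy' : RootStep R y y') (hn : NFof R y' n)
    (hbelow : ∀ V, StarRW R y V → RhsNormalAt R V) :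
    ∃ l₂ r₂ ζ, (l₂, r₂) ∈ R ∧ l₂.label = y.label ∧ n = r₂.subst ζ := by
  obtain ⟨⟨l₂, r₂⟩, h₂, σ₂, rfl, rfl⟩ := hyy'
  choose N hN using hconv.2.exists_nfOf
  have hnormal : NormalForm R (r₂.subst fun x => N (σ₂ x)) :=
    hbelow _ (starRW_subst (fun x => (hN _).1) l₂) l₂ r₂ _ h₂ rfl fun x => (hN _).2
  refine ⟨l₂, r₂, fun x => N (σ₂ x), h₂, (hqd.label_subst_lhs h₂ σ₂).symm, ?_⟩
  exact hnormal.eq_of_starRW (hconv.1.starRW_of_nfOf hn (starRW_subst (fun x => (hN _).1) r₂))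

theorem rhsNormalAt_of_below (hlm : LMSystem R) {U : Term F}
    (IH : ∀ V, Below R V U → RhsNormalAt R V ∧ RootStable R V) : RhsNormalAt R U := by
  have hqd := hlm.quasiDet
  intro l r σ hlr hU hσ
  by_contra hred
  have hstep : OneStep R U (r.subst σ) := hU ▸ oneStep_subst hlr σ
  obtain ⟨n, hn⟩ := hlm.convergent.2.exists_nfOf (r.subst σ)
  have hUl : U.label = l.label := hU ▸ hqd.label_subst_lhs hlr σ
  have hlr_ne := hqd.label_ne hlr
  have hroot : ∀ {y y'}, NonRootStar R (r.subst σ) y → RootStep R y y' → StarRW R y' n →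
      ∃ l₂ r₂ ζ, (l₂, r₂) ∈ R ∧ l₂.label = r.label ∧ n = r₂.subst ζ := by
    intro y y' hy hyy' hy'n
    obtain ⟨l₂, r₂, ζ, h₂, hl₂, hζ⟩ := exists_nf_eq_rhs_subst hqd hlm.convergent hyy' ⟨hy'n, hn.2⟩
      fun V hV => (IH V (hstep.below (hV.belowStep.trans hy.starRW.belowStep))).1
    exact ⟨l₂, r₂, ζ, h₂, by rw [hl₂, hy.label_eq, hqd.label_subst_rhs hlr], hζ⟩
  rcases hlm.forwardClosed.label_eq_or_eq_rhs_subst hlm.convergent hqd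
      ⟨StarRW.head hstep hn.1, hn.2⟩ with hnU | ⟨A, B, θ, hAB, hA, rfl⟩ <;>
    rcases starRW_cases hn.1 with hnr | ⟨y, y', hy, hyy', hy'n⟩
  · exact hlr_ne (by rw [← hUl, ← hnU, hnr.label_eq, hqd.label_subst_rhs hlr])
  · -- `(l, r)` and `(l₂, r₂)` carry swapped root symbols, so they coincide
    obtain ⟨l₂, r₂, ζ, h₂, hl₂, rfl⟩ := hroot hy hyy' hy'n
    obtain ⟨rfl, rfl⟩ := Prod.mk.inj (hqd.eq_of_label_eq_swap (.inl hlr) (.inl h₂)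
      (by rw [← hUl, ← hnU, hqd.label_subst_rhs h₂]) hl₂.symm)
    exact hlr_ne hl₂
  · -- `(A, B) = (l, r)`, and a reduction from `r.subst σ` to `r.subst θ` is trivial for normal `σ`
    obtain ⟨rfl, rfl⟩ := Prod.mk.inj (hqd.eq_of_label_eq (.inl hlr) (.inl hAB) (hA.trans hUl).symm
      (by rw [← hqd.label_subst_rhs hAB θ, hnr.label_eq, hqd.label_subst_rhs hlr]))
    exact hred ((subst_eq_of_starRW hqd hσ r (fun y hy => (IH y (hstep.below hy)).2)
      hnr.starRW) ▸ hn.2)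
  · -- the overlap of `B` with `r₂` yields an `RHS(R)` equation with the root symbols of `(l, r)`;
    -- it must be `(l, r)`, which makes `r` an instance of `l₂`
    obtain ⟨l₂, r₂, ζ, h₂, hl₂, hζ⟩ := hroot hy hyy' hy'n
    obtain ⟨ζ₁, ζ₂, hmem⟩ := exists_mem_rhsSet hqd hAB h₂ (by rw [hA, hUl, hl₂]; exact hlr_ne) hζ
    have heq := hqd.eq_of_label_eq (.inl hlr) hmem
      (by rw [hqd.label_subst_lhs hAB, hA, hUl]) (by rw [hqd.label_subst_lhs h₂, hl₂])
    exact hlm.rightReduced _ hlr _ (by rw [congrArg Prod.snd heq]; exact oneStep_subst h₂ ζ₂)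

theorem rootStable_of_below (hlm : LMSystem R) {U : Term F}
    (IH : ∀ V, Below R V U → RhsNormalAt R V ∧ RootStable R V) (hU : RhsNormalAt R U) :
    RootStable R U := by
  rintro U' w w' ⟨⟨l, r⟩, hlr, σ, rfl, rfl⟩ hw hww'
  choose N hN using hlm.convergent.2.exists_nfOf
  have hσN : ∀ t : Term F, StarRW R (t.subst σ) (t.subst fun x => N (σ x)) :=
    starRW_subst fun x => (hN _).1
  have hnormal : NormalForm R (r.subst fun x => N (σ x)) := by
    by_cases heq : l.subst σ = l.subst fun x => N (σ x)
    · exact hU l r _ hlr heq fun x => (hN _).2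
    · exact (IH _ ((hσN l).below_of_ne heq)).1 l r _ hlr rfl fun x => (hN _).2
  have hw'N : StarRW R w' (r.subst fun x => N (σ x)) :=
    hlm.convergent.1.starRW_of_nfOf ⟨hσN r, hnormal⟩ (hw.starRW.trans hww'.oneStep.starRW)
  refine (IH w ((oneStep_subst hlr σ).below hw.starRW.belowStep)).2.label_ne hlm.quasiDet hww'
    hw'N ?_
  rw [hlm.quasiDet.label_subst_rhs hlr, hw.label_eq, hlm.quasiDet.label_subst_rhs hlr]

theorem LMSystem.rootStable (hlm : LMSystem R) (U : Term F) : RootStable R U := by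
  suffices RhsNormalAt R U ∧ RootStable R U from this.2
  induction U using hlm.convergent.2.wellFounded_below.induction with
  | _ U IH =>
    have hU := rhsNormalAt_of_below hlm IH
    exact ⟨hU, rootStable_of_below hlm IH hU⟩

theorem LMSystem.nonRootStar_of_label_eq (hlm : LMSystem R) {s t : Term F} (h : StarRW R s t)
    (hl : s.label = t.label) : NonRootStar R s t := by
  rcases starRW_cases h with h | ⟨m, m', hm, hmm', hm't⟩
  · exact h
  · exact absurd (hl.symm.trans hm.label_eq.symm)
      ((hlm.rootStable m).label_ne hlm.quasiDet hmm' hm't)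

theorem LMSystem.exists_starRW_at_odp (hlm : LMSystem R) :
    ∀ p s t, StarRW R s t → ODP s t p →
      ∃ u v, SubtermAt s p u ∧ SubtermAt t p v ∧ StarRW R u v
  | [], s, t, h, _ => ⟨s, t, .here s, .here t, h⟩
  | i :: p, s, t, h, hodp => by
    cases s with
    | var n => exact absurd (eq_var_of_label_eq hodp.label_eq.symm).symm hodp.ne
    | app f ss =>
      obtain ⟨tt, rfl, hargs⟩ := (hlm.nonRootStar_of_label_eq h hodp.label_eq).forall₂
      obtain ⟨u, v, hu, hv, hodp'⟩ := hodp.of_app_cons hargs.length_eq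
      obtain ⟨U, V, hU, hV, hUV⟩ :=
        hlm.exists_starRW_at_odp p u v (hargs.rel_of_getElem? hu hv) hodp'
      exact ⟨U, V, .there hu hU, .there hv hV, hUV⟩

end RootStability

/-- in an LM-system, `s →* t` iff for every outermost distinguishing
position `p` of `s` and `t` one has `s|_p →* t|_p`. -/
theorem odp_reductions {F : Type} (R : TRS F) (hlm : LMSystem R) (s t : Term F) :
    StarRW R s t ↔
      ∀ p, ODP s t p →
        ∃ u v, SubtermAt s p u ∧ SubtermAt t p v ∧ StarRW R u v :=
  ⟨fun h p hp => hlm.exists_starRW_at_odp p s t h hp, starRW_of_forall_odp s t⟩
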